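/- The function γ(t) = q^{t(r₁-r₂+t+1)} [n choose t, r₂-t, r₁-r₂+t, n-r₁-t]_q satisfies the functional equation γ(t) = γ(t+1) · χ⁻(q^{-t-1})/χ⁺(q^{-t}) whenever t and t+1 lie in I_n(r₁,r₂), where χ⁺(u) = q^{r₁-r₂-1/2}(1-q^{r₂}u)(1-q^{n-r₁}u) and χ⁻(u) = q^{r₁-r₂-1/2}(1-u)(1-q^{r₂-r₁}u). -/

import Mathlib

noncomputable def qPoch (q : ℝ) (k : ℕ) : ℝ := ∏ j ∈ Finset.range k, (1 - q ^ (j + 1))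

noncomputable def qMultinom4 (q : ℝ) (n a b c d : ℕ) : ℝ :=
  qPoch q n / (qPoch q a * qPoch q b * qPoch q c * qPoch q d)

/-! Passing from `t` to `t + 1` changes each of the four lower q-factorials by a single factor
`1 - q^k`, and `(1 - q^{-a})(1 - q^{-c}) = q^{-a-c}(1 - q^a)(1 - q^c)` turns the factors appearing
in `χ⁻` into those factors times the ratio of the powers of `q` in `γ (t + 1)` and `γ t`. -/

lemma one_sub_inv_mul_one_sub_inv {K : Type*} [Field K] {x y : K} (hx : x ≠ 0) (hy : y ≠ 0) :
    (1 - x⁻¹) * (1 - y⁻¹) = (1 - x) * (1 - y) / (x * y) := by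
  field_simp
  ring

section qPochhammer

variable {q : ℝ}

lemma qPoch_succ (k : ℕ) : qPoch q (k + 1) = qPoch q k * (1 - q ^ (k + 1)) :=
  Finset.prod_range_succ _ _

lemma one_sub_pow_succ_ne_zero (hq : 1 < q) (k : ℕ) : 1 - q ^ (k + 1) ≠ 0 :=
  (sub_neg.mpr (one_lt_pow₀ hq k.succ_ne_zero)).ne

lemma qPoch_ne_zero (hq : 1 < q) (k : ℕ) : qPoch q k ≠ 0 :=
  Finset.prod_ne_zero_iff.mpr fun j _ => one_sub_pow_succ_ne_zero hq j

lemma qMultinom4_shift (hq : 1 < q) (n a b c d : ℕ) :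
    qMultinom4 q n a (b + 1) c (d + 1) * ((1 - q ^ (b + 1)) * (1 - q ^ (d + 1))) =
      qMultinom4 q n (a + 1) b (c + 1) d * ((1 - q ^ (a + 1)) * (1 - q ^ (c + 1))) := by
  have := qPoch_ne_zero hq a
  have := qPoch_ne_zero hq b
  have := qPoch_ne_zero hq c
  have := qPoch_ne_zero hq d
  have := one_sub_pow_succ_ne_zero hq a
  have := one_sub_pow_succ_ne_zero hq b
  have := one_sub_pow_succ_ne_zero hq c
  have := one_sub_pow_succ_ne_zero hq d
  simp only [qMultinom4, qPoch_succ]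
  field_simp

/-- `γ t = γ (t + 1) χ⁻(q^{-t-1}) / χ⁺(q^{-t})` up to the common factor `q^{r₁-r₂-1/2}`, in the
parameters `a = t`, `b + 1 = r₂ - t`, `c = r₁ + t - r₂`, `d + 1 = n - r₁ - t`. -/
lemma pow_mul_qMultinom4_shift (hq : 1 < q) (n a b c d : ℕ) :
    q ^ (a * (c + 1)) * qMultinom4 q n a (b + 1) c (d + 1) =
      q ^ ((a + 1) * (c + 2)) * qMultinom4 q n (a + 1) b (c + 1) d *
        ((1 - (q ^ (a + 1))⁻¹) * (1 - (q ^ (c + 1))⁻¹)) /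
          ((1 - q ^ (b + 1)) * (1 - q ^ (d + 1))) := by
  have hq0 : q ≠ 0 := (one_pos.trans hq).ne'
  have hpow : q ^ ((a + 1) * (c + 2)) = q ^ (a * (c + 1)) * (q ^ (a + 1) * q ^ (c + 1)) := by
    rw [← pow_add, ← pow_add]; ring_nf
  rw [eq_div_iff (mul_ne_zero (one_sub_pow_succ_ne_zero hq b) (one_sub_pow_succ_ne_zero hq d)),
    mul_assoc, qMultinom4_shift hq,
    one_sub_inv_mul_one_sub_inv (pow_ne_zero _ hq0) (pow_ne_zero _ hq0), hpow]
  field_simp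

end qPochhammer

theorem gamma_functional_equation_general (q : ℝ) (hq : 1 < q) (n r₁ r₂ : ℕ)
    (γ : ℕ → ℝ)
    (hγ : ∀ t, γ t = q ^ (t * (r₁ + t + 1 - r₂)) *
      qMultinom4 q n t (r₂ - t) (r₁ + t - r₂) (n - r₁ - t))
    (χp χm : ℝ → ℝ)
    (hχp : ∀ u, χp u = q ^ ((r₁ : ℝ) - r₂ - 1 / 2) *
      (1 - q ^ (r₂ : ℝ) * u) * (1 - q ^ ((n : ℝ) - r₁) * u))
    (hχm : ∀ u, χm u = q ^ ((r₁ : ℝ) - r₂ - 1 / 2) *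
      (1 - u) * (1 - q ^ ((r₂ : ℝ) - r₁) * u))
    (t : ℕ) (htlo : max 0 (r₂ - r₁) ≤ t) (hthi : t + 1 ≤ min r₂ (n - r₁)) :
    γ t = γ (t + 1) * χm (q ^ (-(t : ℝ) - 1)) / χp (q ^ (-(t : ℝ))) := by
  have hq0 : 0 < q := one_pos.trans hq
  obtain ⟨b, rfl⟩ : ∃ b, r₂ = t + 1 + b := ⟨r₂ - (t + 1), by omega⟩
  obtain ⟨c, rfl⟩ : ∃ c, r₁ = b + c + 1 := ⟨r₁ - (b + 1), by omega⟩
  obtain ⟨d, rfl⟩ : ∃ d, n = t + b + c + d + 2 := ⟨n - (t + b + c + 2), by omega⟩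
  set K := q ^ (((b + c + 1 : ℕ) : ℝ) - (t + 1 + b : ℕ) - 1 / 2)
  have hγt : γ t = q ^ (t * (c + 1)) * qMultinom4 q (t + b + c + d + 2) t (b + 1) c (d + 1) := by
    rw [hγ]; congr 3 <;> omega
  have hγt1 : γ (t + 1) =
      q ^ ((t + 1) * (c + 2)) * qMultinom4 q (t + b + c + d + 2) (t + 1) b (c + 1) d := by
    rw [hγ]; congr 3 <;> omega
  have hχm : χm (q ^ (-(t : ℝ) - 1)) =
      K * ((1 - (q ^ (t + 1))⁻¹) * (1 - (q ^ (c + 1))⁻¹)) := by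
    have hu : q ^ (-(t : ℝ) - 1) = (q ^ (t + 1))⁻¹ := by
      rw [← Real.rpow_natCast, ← Real.rpow_neg hq0.le]; push_cast; ring_nf
    have hv : q ^ (((t + 1 + b : ℕ) : ℝ) - (b + c + 1 : ℕ)) * q ^ (-(t : ℝ) - 1) =
        (q ^ (c + 1))⁻¹ := by
      rw [← Real.rpow_add hq0, ← Real.rpow_natCast, ← Real.rpow_neg hq0.le]; push_cast; ring_nf
    rw [hχm, hv, hu, mul_assoc]
  have hχp : χp (q ^ (-(t : ℝ))) = K * ((1 - q ^ (b + 1)) * (1 - q ^ (d + 1))) := by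
    have hu : q ^ ((t + 1 + b : ℕ) : ℝ) * q ^ (-(t : ℝ)) = q ^ (b + 1) := by
      rw [← Real.rpow_add hq0, ← Real.rpow_natCast]; push_cast; ring_nf
    have hv : q ^ (((t + b + c + d + 2 : ℕ) : ℝ) - (b + c + 1 : ℕ)) * q ^ (-(t : ℝ)) =
        q ^ (d + 1) := by
      rw [← Real.rpow_add hq0, ← Real.rpow_natCast]; push_cast; ring_nf
    rw [hχp, hu, hv, mul_assoc]
  rw [hγt, hγt1, hχm, hχp, pow_mul_qMultinom4_shift hq]
  have hK : K ≠ 0 := (Real.rpow_pos_of_pos hq0 _).ne'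
  field_simp

/-- The function `γ(t) = q^{t(r₁-r₂+t+1)} [n choose t, r₂-t, r₁-r₂+t, n-r₁-t]_q` satisfies
`γ(t) = γ(t+1) χ⁻(q^{-t-1})/χ⁺(q^{-t})` whenever `t, t+1 ∈ I_n(r₁,r₂)`, where
`χ⁺(u) = q^{r₁-r₂-1/2}(1-q^{r₂}u)(1-q^{n-r₁}u)` and
`χ⁻(u) = q^{r₁-r₂-1/2}(1-u)(1-q^{r₂-r₁}u)`. -/
theorem gamma_functional_equation (q : ℝ) (hq : 1 < q) (n r₁ r₂ : ℕ)
    (hr₁ : r₁ ≤ n) (hr₂ : r₂ ≤ n)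
    (γ : ℕ → ℝ)
    (hγ : ∀ t, γ t = q ^ (t * (r₁ + t + 1 - r₂)) *
      qMultinom4 q n t (r₂ - t) (r₁ + t - r₂) (n - r₁ - t))
    (χp χm : ℝ → ℝ)
    (hχp : ∀ u, χp u = q ^ ((r₁ : ℝ) - r₂ - 1 / 2) *
      (1 - q ^ (r₂ : ℝ) * u) * (1 - q ^ ((n : ℝ) - r₁) * u))
    (hχm : ∀ u, χm u = q ^ ((r₁ : ℝ) - r₂ - 1 / 2) *
      (1 - u) * (1 - q ^ ((r₂ : ℝ) - r₁) * u))
    (t : ℕ) (htlo : max 0 (r₂ - r₁) ≤ t) (hthi : t + 1 ≤ min r₂ (n - r₁)) :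
    γ t = γ (t + 1) * χm (q ^ (-(t : ℝ) - 1)) / χp (q ^ (-(t : ℝ))) :=
  gamma_functional_equation_general q hq n r₁ r₂ γ hγ χp χm hχp hχm t htlo hthi
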